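/- Uncrossing with an extreme set: if S is an extreme set and S₁ ⊆ V is any set that crosses S (i.e., S ∩ S₁, S \ S₁, and S₁ \ S are all nonempty), then δ(S₁ \ S) < δ(S₁). -/
import Mathlib


open Finset

/-- The cut value of a set `X` in a weighted undirected graph on vertex set `V`
with edge-weight function `w`: the total weight of edges with exactly one
endpoint in `X`. -/
def cutVal {V : Type*} [Fintype V] [DecidableEq V] (w : V → V → ℝ) (X : Finset V) : ℝ :=
  ∑ u ∈ X, ∑ v ∈ Xᶜ, w u v

/-- A nonempty proper subset `X ⊊ V` is extreme if every nonempty proper subset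
`Y ⊊ X` satisfies `δ(Y) > δ(X)`. -/
def IsExtremeSet {V : Type*} [Fintype V] [DecidableEq V] (w : V → V → ℝ) (X : Finset V) : Prop :=
  X.Nonempty ∧ X ≠ Finset.univ ∧
    ∀ Y : Finset V, Y.Nonempty → Y ⊂ X → cutVal w Y > cutVal w X

/-- symmetric "exactly one endpoint" weight -/
def dVal {V : Type*} [Fintype V] [DecidableEq V] (w : V → V → ℝ) (X : Finset V)
    (u v : V) : ℝ :=
  if (u ∈ X) ↔ (v ∈ X) then 0 else w u v

lemma cutVal_as_ite {V : Type*} [Fintype V] [DecidableEq V] (w : V → V → ℝ) (X : Finset V) :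
    cutVal w X = ∑ u : V, ∑ v : V, (if u ∈ X ∧ v ∉ X then w u v else 0) := by
  rw [cutVal]
  symm
  calc ∑ u : V, ∑ v : V, (if u ∈ X ∧ v ∉ X then w u v else 0)
      = ∑ u : V, (if u ∈ X then ∑ v ∈ Xᶜ, w u v else 0) := by
        apply Finset.sum_congr rfl; intro u _
        by_cases hu : u ∈ X
        · simp only [hu, true_and, if_true]
          rw [← Finset.sum_filter]
          congr 1; ext v; simp
        · simp [hu]
    _ = ∑ u ∈ X, ∑ v ∈ Xᶜ, w u v := by
        rw [Finset.sum_ite_mem, Finset.univ_inter]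

lemma dVal_sum {V : Type*} [Fintype V] [DecidableEq V] (w : V → V → ℝ)
    (hsymm : ∀ u v, w u v = w v u) (X : Finset V) :
    ∑ u : V, ∑ v : V, dVal w X u v = 2 * cutVal w X := by
  have key : ∀ u v : V, dVal w X u v =
      (if u ∈ X ∧ v ∉ X then w u v else 0) + (if v ∈ X ∧ u ∉ X then w u v else 0) := by
    intro u v
    unfold dVal
    by_cases hu : u ∈ X <;> by_cases hv : v ∈ X <;> simp [hu, hv]
  simp only [key, Finset.sum_add_distrib]
  rw [cutVal_as_ite]
  have h2 : ∑ u : V, ∑ v : V, (if v ∈ X ∧ u ∉ X then w u v else 0)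
      = ∑ u : V, ∑ v : V, (if u ∈ X ∧ v ∉ X then w u v else 0) := by
    rw [Finset.sum_comm]
    congr 1; ext u; congr 1; ext v
    rw [hsymm v u]
  rw [h2]; ring

lemma posimodular {V : Type*} [Fintype V] [DecidableEq V] (w : V → V → ℝ)
    (hsymm : ∀ u v, w u v = w v u) (hnonneg : ∀ u v, 0 ≤ w u v) (A B : Finset V) :
    cutVal w (A \ B) + cutVal w (B \ A) ≤ cutVal w A + cutVal w B := by
  have key : ∀ u v : V, dVal w (A \ B) u v + dVal w (B \ A) u v ≤
      dVal w A u v + dVal w B u v := by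
    intro u v
    unfold dVal
    by_cases hua : u ∈ A <;> by_cases hub : u ∈ B <;>
      by_cases hva : v ∈ A <;> by_cases hvb : v ∈ B <;>
      simp [Finset.mem_sdiff, hua, hub, hva, hvb, hnonneg u v]
  have hsum : ∑ u : V, ∑ v : V, (dVal w (A \ B) u v + dVal w (B \ A) u v)
      ≤ ∑ u : V, ∑ v : V, (dVal w A u v + dVal w B u v) := by
    apply Finset.sum_le_sum; intro u _
    apply Finset.sum_le_sum; intro v _
    exact key u v
  simp only [Finset.sum_add_distrib] at hsum
  rw [dVal_sum w hsymm, dVal_sum w hsymm, dVal_sum w hsymm, dVal_sum w hsymm] at hsum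
  linarith

theorem uncross_with_extreme {V : Type*} [Fintype V] [DecidableEq V] (w : V → V → ℝ)
    (hsymm : ∀ u v, w u v = w v u) (hnonneg : ∀ u v, 0 ≤ w u v)
    (hdiag : ∀ v, w v v = 0)
    (S S₁ : Finset V) (hS : IsExtremeSet w S)
    (h1 : (S ∩ S₁).Nonempty) (h2 : (S \ S₁).Nonempty) (h3 : (S₁ \ S).Nonempty) :
    cutVal w (S₁ \ S) < cutVal w S₁ := by
  have hposi := posimodular w hsymm hnonneg S S₁
  have hssub : S \ S₁ ⊂ S := by
    constructor
    · exact Finset.sdiff_subset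
    · intro hsub
      obtain ⟨x, hx⟩ := h1
      rw [Finset.mem_inter] at hx
      have := hsub hx.1
      rw [Finset.mem_sdiff] at this
      exact this.2 hx.2
  have hgt := hS.2.2 (S \ S₁) h2 hssub
  linarith
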